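/- Suppose X^n ⊂ ℝ^d (d ≥ 2) is in general position, M(X^n) has affine dimension d, and z_1 lies in the interior of M(X^n). Then for every u ∈ U_{z_1}, the hyperplane {x ∈ ℝ^d : u·(x − z_1) = 0} contains no sample point X_i; equivalently, u·X_i ≠ u·z_1 for all i = 1, …, n. -/

import Mathlib

/-!
Push `z₁` slightly against an optimal direction `u`, to `y = z₁ - t • u`; for small `t > 0` the
point `y` is still deepest. A sample point on the hyperplane `⟪u, ·⟫ = ⟪u, z₁⟫` would lie in the
halfspace counted for `z₁` in direction `u` but not in the one counted for `y`, so
`depth y < depth z₁`, although both equal the maximal depth.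
-/

open scoped RealInnerProductSpace
open MeasureTheory

noncomputable section

/-- `E d` is the Euclidean space `ℝ^d`. -/
abbrev E (d : ℕ) : Type := EuclideanSpace ℝ (Fin d)

/-- A sample `X` of `n` points in `ℝ^d` is in general position if no affine hyperplane
(encoded as `{x | ⟪v, x⟫ = c}` for some `v ≠ 0`) contains more than `d` of the points. -/
def inGeneralPosition {d n : ℕ} (X : Fin n → E d) : Prop :=
  ∀ v : E d, v ≠ 0 → ∀ c : ℝ, ({i : Fin n | ⟪v, X i⟫ = c} : Set (Fin n)).ncard ≤ d

/-- Number of sample points in the closed halfspace `{z | ⟪u, z⟫ ≤ ⟪u, x⟫}`. -/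
def sideCount {d n : ℕ} (X : Fin n → E d) (u x : E d) : ℕ :=
  ({i : Fin n | ⟪u, X i⟫ ≤ ⟪u, x⟫} : Set (Fin n)).ncard

/-- Tukey's halfspace depth of `x` with respect to the sample `X`. -/
def depth {d n : ℕ} (X : Fin n → E d) (x : E d) : ℝ :=
  sInf {r : ℝ | ∃ u : E d, ‖u‖ = 1 ∧ r = (sideCount X u x : ℝ) / (n : ℝ)}

/-- The maximum Tukey depth `λ*` of the sample `X`. -/
def maxDepth {d n : ℕ} (X : Fin n → E d) : ℝ :=
  sSup (Set.range (depth X))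

/-- The set `M(X)` of deepest points. -/
def MSet {d n : ℕ} (X : Fin n → E d) : Set (E d) :=
  {x | depth X x = maxDepth X}

/-- `U_x`: the set of optimal (unit) directions realizing the depth at `x`. -/
def USet {d n : ℕ} (X : Fin n → E d) (x : E d) : Set (E d) :=
  {u | ‖u‖ = 1 ∧ (sideCount X u x : ℝ) / (n : ℝ) = depth X x}

/-- `H_{x,y}`: the open hemisphere of unit directions `u` with `⟪u, x⟫ < ⟪u, y⟫`. -/
def HSet {d : ℕ} (x y : E d) : Set (E d) :=
  {u | ‖u‖ = 1 ∧ ⟪u, x⟫ < ⟪u, y⟫}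

/-- `B_z`. -/
def BSet {d n : ℕ} (X : Fin n → E d) (z : E d) : Set (E d) :=
  {x | x ∈ MSet X ∧ USet X x ∩ HSet x z = ∅}

/-- `B̃_z = B_z \ {z}`. -/
def BTilde {d n : ℕ} (X : Fin n → E d) (z : E d) : Set (E d) :=
  BSet X z \ {z}

/-- `v` is a unit vector normal to an affine hyperplane spanned by `d` of the sample points. -/
def normalToSampleHyperplane {d n : ℕ} (X : Fin n → E d) (v : E d) : Prop :=
  ‖v‖ = 1 ∧ ∃ (s : Finset (Fin n)) (c : ℝ), s.card = d ∧
    (affineSpan ℝ (X '' (s : Set (Fin n))) : Set (E d)) = {x : E d | ⟪v, x⟫ = c}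

/-- Condition (2.1) on a unit direction `u`. -/
def cond21 {d n : ℕ} (X : Fin n → E d) (u : E d) : Prop :=
  ∀ v : E d, normalToSampleHyperplane X v → ⟪u, v⟫ ≠ 0

/-- `A` represents the columns of a `d × (d-1)` matrix which together with the unit
vector `u` form an orthonormal basis of `ℝ^d`. -/
def IsAu {d : ℕ} (u : E d) (A : Fin (d - 1) → E d) : Prop :=
  ‖u‖ = 1 ∧ Orthonormal ℝ A ∧ ∀ j, ⟪A j, u⟫ = 0

/-- The `A_u`-projection `A_u^T x ∈ ℝ^{d-1}` of a point `x ∈ ℝ^d`. -/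
def proj {d : ℕ} (A : Fin (d - 1) → E d) (x : E d) : E (d - 1) :=
  (WithLp.equiv 2 (Fin (d - 1) → ℝ)).symm (fun j => ⟪A j, x⟫)

/-- The embedding `A_u x = ∑ j x_j A_j ∈ ℝ^d` of a point `x ∈ ℝ^{d-1}`. -/
def embed {d : ℕ} (A : Fin (d - 1) → E d) (x : E (d - 1)) : E d :=
  ∑ j, x j • A j

/-- `λ₀ = inf_{u ∈ S^{d-1}} λ*(X_u^n)`, the infimum over all directions of the maximum
Tukey depth of the projected sample. -/
def lambda0 {d n : ℕ} (X : Fin n → E d) : ℝ :=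
  sInf {r : ℝ | ∃ (u : E d) (A : Fin (d - 1) → E d),
    IsAu u A ∧ r = maxDepth (fun i => proj A (X i))}

/-- The average (barycenter) of a set `K ⊆ ℝ^d`, taken with respect to the Hausdorff
measure of dimension equal to the affine dimension of `K`. -/
def setAverage {d : ℕ} (K : Set (E d)) : E d :=
  (μH[(Module.finrank ℝ (affineSpan ℝ K).direction : ℝ)] K).toReal⁻¹ •
    ∫ x in K, x ∂(μH[(Module.finrank ℝ (affineSpan ℝ K).direction : ℝ)])

/-- Tukey's halfspace median: the average of all deepest points. -/
def TukeyMedian {d n : ℕ} (X : Fin n → E d) : E d :=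
  setAverage (MSet X)

/-- `m` contaminating points suffice to break down the Tukey median at `X`. -/
def breaksDown {d n : ℕ} (X : Fin n → E d) (m : ℕ) : Prop :=
  ∀ C : ℝ, ∃ Y : Fin m → E d, C < ‖TukeyMedian (Fin.append X Y) - TukeyMedian X‖

/-- The finite sample (additional) breakdown point of the Tukey median at `X`. -/
def FSBP {d n : ℕ} (X : Fin n → E d) : ℝ :=
  sInf {r : ℝ | ∃ m : ℕ, 1 ≤ m ∧ breaksDown X m ∧ r = (m : ℝ) / ((n : ℝ) + (m : ℝ))}

open scoped Topology
open Filter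

theorem exists_mem_inner_lt_of_mem_interior {F : Type*} [NormedAddCommGroup F]
    [InnerProductSpace ℝ F] {s : Set F} {x u : F} (hx : x ∈ interior s) (hu : u ≠ 0) :
    ∃ y ∈ s, ⟪u, y⟫ < ⟪u, x⟫ := by
  have hlim : Tendsto (fun t : ℝ => x - t • u) (𝓝[>] 0) (𝓝 x) := by
    have : Tendsto (fun t : ℝ => x - t • u) (𝓝 0) (𝓝 (x - (0 : ℝ) • u)) :=
      (continuous_const.sub (continuous_id.smul continuous_const)).tendsto 0
    simpa using this.mono_left nhdsWithin_le_nhds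
  obtain ⟨t, hts, ht⟩ :=
    ((hlim.eventually (mem_interior_iff_mem_nhds.mp hx)).and self_mem_nhdsWithin).exists
  refine ⟨x - t • u, hts, ?_⟩
  have : 0 < t * ‖u‖ ^ 2 := mul_pos ht (pow_pos (norm_pos_iff.mpr hu) 2)
  rw [inner_sub_right, real_inner_smul_right, real_inner_self_eq_norm_sq]
  linarith

section

variable {d n : ℕ} (X : Fin n → E d)

theorem sideCount_lt_of_inner_lt {u x y : E d} {i : Fin n} (hy : ⟪u, y⟫ < ⟪u, X i⟫)
    (hx : ⟪u, X i⟫ ≤ ⟪u, x⟫) : sideCount X u y < sideCount X u x :=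
  Set.ncard_lt_ncard
    ⟨fun _ hj => le_trans hj (hy.le.trans hx), fun hsub => (hsub hx).not_gt hy⟩
    (Set.toFinite _)

theorem depth_le_sideCount_div {u : E d} (hu : ‖u‖ = 1) (x : E d) :
    depth X x ≤ sideCount X u x / n :=
  csInf_le ⟨0, by rintro _ ⟨v, -, rfl⟩; positivity⟩ ⟨u, hu, rfl⟩

theorem depth_lt_of_mem_USet {u x y : E d} (hu : u ∈ USet X x) {i : Fin n}
    (hy : ⟪u, y⟫ < ⟪u, X i⟫) (hx : ⟪u, X i⟫ ≤ ⟪u, x⟫) : depth X y < depth X x := by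
  have hn : (0 : ℝ) < n := by exact_mod_cast i.pos
  calc depth X y ≤ sideCount X u y / n := depth_le_sideCount_div X hu.1 y
    _ < sideCount X u x / n := by gcongr; exact_mod_cast sideCount_lt_of_inner_lt X hy hx
    _ = depth X x := hu.2

end

theorem optimal_hyperplane_contains_no_sample_point_general {d n : ℕ}
    (X : Fin n → E d)
    (z₁ : E d) (hz₁ : z₁ ∈ interior (MSet X)) :
    ∀ u ∈ USet X z₁, ∀ i : Fin n, ⟪u, X i⟫ ≠ ⟪u, z₁⟫ := by
  intro u hu i hi
  have hu₀ : u ≠ 0 := norm_ne_zero_iff.mp (hu.1 ▸ one_ne_zero)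
  obtain ⟨y, hyM, hy⟩ := exists_mem_inner_lt_of_mem_interior hz₁ hu₀
  have hz₁M : z₁ ∈ MSet X := interior_subset hz₁
  exact (depth_lt_of_mem_USet X hu (hi ▸ hy) hi.le).ne (hyM.trans hz₁M.symm)

/-- If `z₁` lies in the interior of `M(X)` then for every optimal direction
`u ∈ U_{z₁}` the hyperplane through `z₁` with normal `u` contains no sample point. -/
theorem optimal_hyperplane_contains_no_sample_point {d n : ℕ} (hd : 2 ≤ d)
    (X : Fin n → E d) (hX : inGeneralPosition X) (hdim : affineSpan ℝ (MSet X) = ⊤)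
    (z₁ : E d) (hz₁ : z₁ ∈ interior (MSet X)) :
    ∀ u ∈ USet X z₁, ∀ i : Fin n, ⟪u, X i⟫ ≠ ⟪u, z₁⟫ :=
  optimal_hyperplane_contains_no_sample_point_general X z₁ hz₁
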